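/- For every ξ ∈ ℝ with ξ ≠ 0, define λ(ξ) = tanh(ξ/2)/(4ξ). Then for every x ∈ ℝ, log(1 + eˣ) ≤ λ(ξ)·(x² − ξ²) + (x − ξ)/2 + log(1 + e^ξ), with equality when x = ξ. -/

import Mathlib

/-!
Since `log (1 + eˣ) = x/2 + log 2 + log (cosh (x/2))`, the bound is the inequality
`log (cosh t) ≤ log (cosh b) + tanh b / (2b) · (t² - b²)` at `t = x/2`, `b = ξ/2`.
Both sides are even in `t` and in `b`, and for `b > 0` the function
`G s = tanh b / (2b) · s² - log (cosh s)` has derivative `s · (tanh b / b - tanh s / s)`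
on `s ≥ 0`. This changes sign at `s = b` because `tanh s / s` decreases on `(0, ∞)`
(its derivative has the sign of `s - sinh s cosh s`), so `G` is minimal at `b`.
-/

open Real Set

namespace Real

lemma hasDerivAt_tanh (x : ℝ) : HasDerivAt tanh (1 / cosh x ^ 2) x := by
  have h := (hasDerivAt_sinh x).div (hasDerivAt_cosh x) (cosh_pos x).ne'
  rw [show tanh = sinh / cosh from funext tanh_eq_sinh_div_cosh]
  refine h.congr_deriv ?_
  rw [← cosh_sq_sub_sinh_sq x]
  ring

lemma self_le_sinh_mul_cosh {x : ℝ} (hx : 0 ≤ x) : x ≤ sinh x * cosh x := by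
  have h := self_le_sinh_iff.mpr (mul_nonneg zero_le_two hx)
  rw [sinh_two_mul] at h
  linarith

lemma antitoneOn_tanh_div_self : AntitoneOn (fun x => tanh x / x) (Ioi 0) := by
  have hderiv : ∀ x ∈ Ioi (0 : ℝ),
      HasDerivAt (fun x => tanh x / x) ((1 / cosh x ^ 2 * x - tanh x * 1) / x ^ 2) x :=
    fun x hx => (hasDerivAt_tanh x).div (hasDerivAt_id x) (ne_of_gt hx)
  refine antitoneOn_of_deriv_nonpos (convex_Ioi 0)
    (fun x hx => (hderiv x hx).continuousAt.continuousWithinAt)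
    (fun x hx => (hderiv x (interior_subset hx)).differentiableAt.differentiableWithinAt)
    fun x hx => ?_
  rw [interior_Ioi] at hx
  rw [(hderiv x hx).deriv]
  have hc := cosh_pos x
  refine div_nonpos_of_nonpos_of_nonneg ?_ (sq_nonneg x)
  rw [tanh_eq_sinh_div_cosh, sub_nonpos, div_mul_eq_mul_div, one_mul, mul_one,
    div_le_div_iff₀ (by positivity) hc]
  nlinarith [self_le_sinh_mul_cosh (le_of_lt hx)]

lemma log_one_add_exp_eq (x : ℝ) : log (1 + exp x) = x / 2 + log 2 + log (cosh (x / 2)) := by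
  have h : 1 + exp x = exp (x / 2) * (2 * cosh (x / 2)) := by
    rw [cosh_eq, mul_div_cancel₀ _ two_ne_zero, mul_add, ← exp_add, ← exp_add]
    ring_nf
    rw [exp_zero, add_comm]
  rw [h, log_mul (exp_ne_zero _) (by positivity), log_exp,
    log_mul two_ne_zero (cosh_pos _).ne', add_assoc]

lemma log_cosh_le_of_pos {b t : ℝ} (hb : 0 < b) (ht : 0 ≤ t) :
    log (cosh t) ≤ tanh b / (2 * b) * (t ^ 2 - b ^ 2) + log (cosh b) := by
  set c := tanh b / (2 * b)
  let G : ℝ → ℝ := fun s => c * s ^ 2 - log (cosh s)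
  have hG : ∀ s, HasDerivAt G (s * (tanh b / b - tanh s / s)) s := fun s => by
    have h := ((hasDerivAt_pow 2 s).const_mul c).sub ((hasDerivAt_cosh s).log (cosh_pos s).ne')
    refine h.congr_deriv ?_
    rcases eq_or_ne s 0 with rfl | hs
    · simp
    · simp only [c, tanh_eq_sinh_div_cosh]
      field_simp
      ring
  have hGdiff : Differentiable ℝ G := fun s => (hG s).differentiableAt
  suffices G b ≤ G t by
    simp only [G] at this
    linarith
  rcases le_or_gt t b with htb | hbt
  · refine antitoneOn_of_deriv_nonpos (convex_Icc 0 b) hGdiff.continuous.continuousOn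
      hGdiff.differentiableOn (fun s hs => ?_) ⟨ht, htb⟩ ⟨hb.le, le_rfl⟩ htb
    rw [interior_Icc] at hs
    rw [(hG s).deriv]
    exact mul_nonpos_of_nonneg_of_nonpos hs.1.le
      (sub_nonpos.mpr (antitoneOn_tanh_div_self hs.1 hb hs.2.le))
  · refine monotoneOn_of_deriv_nonneg (convex_Ici b) hGdiff.continuous.continuousOn
      hGdiff.differentiableOn (fun s hs => ?_) self_mem_Ici hbt.le hbt.le
    rw [interior_Ici] at hs
    rw [(hG s).deriv]
    exact mul_nonneg (hb.trans hs).le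
      (sub_nonneg.mpr (antitoneOn_tanh_div_self hb (hb.trans hs) hs.le))

lemma log_cosh_le {b : ℝ} (hb : b ≠ 0) (t : ℝ) :
    log (cosh t) ≤ tanh b / (2 * b) * (t ^ 2 - b ^ 2) + log (cosh b) := by
  have h := log_cosh_le_of_pos (abs_pos.mpr hb) (abs_nonneg t)
  have heven : tanh |b| / (2 * |b|) = tanh b / (2 * b) := by
    rcases abs_choice b with hab | hab <;> rw [hab]
    rw [tanh_neg, mul_neg, neg_div_neg_eq]
  rwa [cosh_abs, cosh_abs, sq_abs, sq_abs, heven] at h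

end Real

/-- Jaakkola–Jordan tight quadratic bound for the logistic log-partition function:
for `ξ ≠ 0` and `λ(ξ) = tanh(ξ/2)/(4ξ)`, every real `x` satisfies
`log(1 + eˣ) ≤ λ(ξ)(x² - ξ²) + (x - ξ)/2 + log(1 + e^ξ)`, with equality at `x = ξ`. -/
theorem jaakkola_jordan_bound (ξ : ℝ) (hξ : ξ ≠ 0) :
    (∀ x : ℝ,
      Real.log (1 + Real.exp x)
        ≤ (Real.tanh (ξ / 2) / (4 * ξ)) * (x ^ 2 - ξ ^ 2) + (x - ξ) / 2
            + Real.log (1 + Real.exp ξ))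
    ∧ Real.log (1 + Real.exp ξ)
        = (Real.tanh (ξ / 2) / (4 * ξ)) * (ξ ^ 2 - ξ ^ 2) + (ξ - ξ) / 2
            + Real.log (1 + Real.exp ξ) := by
  refine ⟨fun x => ?_, by ring⟩
  have hcosh := log_cosh_le (div_ne_zero hξ two_ne_zero) (x / 2)
  have hscale : tanh (ξ / 2) / (4 * ξ) * (x ^ 2 - ξ ^ 2)
      = tanh (ξ / 2) / (2 * (ξ / 2)) * ((x / 2) ^ 2 - (ξ / 2) ^ 2) := by
    field_simp
    ring
  rw [log_one_add_exp_eq x, log_one_add_exp_eq ξ, hscale]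
  linarith
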